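/- Fix c ≥ 2 and let u = I_c^{e_1} D_c^{e_2} I_c^{e_3} ... L_c^{e_n} with all e_i > 0 (L = I if n odd, D if n even). Then r(u) = 2(e_1 + ... + e_n) - n, where r(u) is the smallest k such that alt(c,k) contains u. -/

import Mathlib

/-- The increasing sequence `1 2 ... c`. -/
def Ic (c : ℕ) : List ℕ := List.range' 1 c

/-- The decreasing sequence `c (c-1) ... 1`. -/
def Dc (c : ℕ) : List ℕ := (Ic c).reverse

/-- `k` concatenated copies of the list `l`. -/
def rep (l : List ℕ) (k : ℕ) : List ℕ := (List.replicate k l).flatten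

/-- `up(c,t)`: the sequence `1 2 ... c` repeated `t` times. -/
def upSeq (c t : ℕ) : List ℕ := rep (Ic c) t

/-- `alt(c,k)`: the concatenation of `k` permutations alternating `I_c, D_c, I_c, ...`. -/
def altSeq (c k : ℕ) : List ℕ :=
  ((List.range k).map (fun i => if i % 2 = 0 then Ic c else Dc c)).flatten

/-- A sequence `s` contains `u` if some subsequence of `s` is obtained from `u`
by an injective renaming of its letters. -/
def Contains (s u : List ℕ) : Prop :=
  ∃ f : ℕ → ℕ, Function.Injective f ∧ (u.map f).Sublist s

/-- `F` is an `(r,s)`-formation: a concatenation of `s` permutations of a set of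
`r` distinct letters. -/
def IsFormation (r s : ℕ) (F : List ℕ) : Prop :=
  ∃ (A : Finset ℕ) (ps : List (List ℕ)), A.card = r ∧ ps.length = s ∧
    (∀ p ∈ ps, p.Nodup ∧ p.toFinset = A) ∧ F = ps.flatten

/-- `F` is a binary `(r,s)`-formation: an `(r,s)`-formation in which every
constituent permutation equals a fixed permutation `p` or its reverse. -/
def IsBinaryFormation (r s : ℕ) (F : List ℕ) : Prop :=
  ∃ (A : Finset ℕ) (p : List ℕ) (ps : List (List ℕ)), A.card = r ∧
    p.Nodup ∧ p.toFinset = A ∧ ps.length = s ∧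
    (∀ q ∈ ps, q = p ∨ q = p.reverse) ∧ F = ps.flatten

/-- The formation width of `u`: the minimum `s` such that there exists `r` for which
every `(r,s)`-formation contains `u`. -/
noncomputable def fw (u : List ℕ) : ℕ :=
  sInf {s | ∃ r, ∀ F, IsFormation r s F → Contains F u}

/-- The formation length of `u`: the minimum `r` such that every `(r, fw u)`-formation
contains `u`. -/
noncomputable def fl (u : List ℕ) : ℕ :=
  sInf {r | ∀ F, IsFormation r (fw u) F → Contains F u}

/-- For a permutation `π` of `{1,...,c}`, the sequence `I_π = π(1) π(2) ... π(c)`. -/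
def Iperm {c : ℕ} (π : Equiv.Perm (Fin c)) : List ℕ :=
  List.ofFn (fun i => (π i).val + 1)

/-- `l(u)` for a sequence `u` on letters `1,...,c`: the smallest `k` such that
`up(c,k)` contains `u`. -/
noncomputable def lval (c : ℕ) (u : List ℕ) : ℕ := sInf {k | Contains (upSeq c k) u}

/-- `r(u)` for a sequence `u` on letters `1,...,c`: the smallest `k` such that
`alt(c,k)` contains `u`. -/
noncomputable def rval (c : ℕ) (u : List ℕ) : ℕ := sInf {k | Contains (altSeq c k) u}

/-- The binary formation `I_c^{e_1} D_c^{e_2} I_c^{e_3} ...` determined by the list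
of exponents `e` (blocks alternate starting with `I_c`). -/
def altBlocks (c : ℕ) (e : List ℕ) : List ℕ :=
  (e.zipIdx.map (fun p => rep (if p.2 % 2 = 0 then Ic c else Dc c) p.1)).flatten

/-!
The upper bound is the identity embedding: a block `I_c^k` of `u` fits into the `2k - 1`
consecutive permutations `I_c D_c ⋯ I_c` of the alternating sequence, and the next block of `u`,
a power of `D_c`, starts in the permutation after them.

For the lower bound, follow only the images `a ≠ b` of the letters `1` and `c` under an embedding
into `alt(c, m)`. In `u` they form `(ab)^{e₁} (ba)^{e₂} (ab)^{e₃} ⋯`, which contains the alternating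
word `abab⋯` of length `2(e₁ + ⋯ + eₙ) - n + 1`. In `alt(c, m)` the letters `a, b` form
`(xy)(yx)(xy)⋯` with `m` factors (some letters possibly absent), whose alternating subwords have
length at most `m + 1`.
-/

namespace List

variable {α : Type*}

def altJoin (p q : List α) : ℕ → List α
  | 0 => []
  | m + 1 => p ++ altJoin q p m

def zigzag (a b : α) : ℕ → List α
  | 0 => []
  | n + 1 => a :: zigzag b a n

theorem altJoin_sublist_altJoin {p p' q q' : List α} (hp : p <+ p') (hq : q <+ q') (m : ℕ) :
    altJoin p q m <+ altJoin p' q' m := by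
  induction m generalizing p p' q q' with
  | zero => exact .slnil
  | succ m ih => exact hp.append (ih hq hp)

theorem filter_altJoin (P : α → Bool) (p q : List α) (m : ℕ) :
    (altJoin p q m).filter P = altJoin (p.filter P) (q.filter P) m := by
  induction m generalizing p q with
  | zero => rfl
  | succ m ih => simp only [altJoin, filter_append, ih]

theorem map_zigzag {β : Type*} (f : α → β) (a b : α) (n : ℕ) :
    (zigzag a b n).map f = zigzag (f a) (f b) n := by
  induction n generalizing a b with
  | zero => rfl
  | succ n ih => simp only [zigzag, map_cons, ih]

theorem eq_or_eq_of_mem_zigzag {a b x : α} {n : ℕ} (h : x ∈ zigzag a b n) :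
    x = a ∨ x = b := by
  induction n generalizing a b with
  | zero => simp [zigzag] at h
  | succ n ih =>
    rcases mem_cons.1 h with h | h
    · exact .inl h
    · exact (ih h).symm

theorem length_zigzag (a b : α) (n : ℕ) : (zigzag a b n).length = n := by
  induction n generalizing a b with
  | zero => rfl
  | succ n ih => simp only [zigzag, length_cons, ih]

theorem isChain_zigzag {a b : α} (hab : a ≠ b) (n : ℕ) :
    (zigzag a b n).IsChain (· ≠ ·) := by
  induction n generalizing a b with
  | zero => exact .nil
  | succ n ih =>
    cases n with
    | zero => exact .singleton a
    | succ n => exact (ih hab.symm).cons_cons hab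

theorem exists_ne_sublist_pair [Nontrivial α] {L : List α} (hL : L.Nodup) (h2 : L.length ≤ 2) :
    ∃ x y, x ≠ y ∧ L <+ [x, y] := by
  match L, hL, h2 with
  | [], _, _ =>
    obtain ⟨x, y, hxy⟩ := exists_pair_ne α
    exact ⟨x, y, hxy, nil_sublist _⟩
  | [x], _, _ =>
    obtain ⟨y, hyx⟩ := exists_ne x
    exact ⟨x, y, hyx.symm, (singleton_sublist.2 mem_cons_self)⟩
  | [x, y], hL, _ => exact ⟨x, y, by simpa using hL, Sublist.refl _⟩

variable [DecidableEq α]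

theorem length_destutter'_altJoin_pair {x y : α} (hxy : x ≠ y) (m : ℕ) :
    ((altJoin [x, y] [y, x] m).destutter' (· ≠ ·) x).length = m + 1 := by
  induction m generalizing x y with
  | zero => rfl
  | succ m ih =>
    simp only [altJoin, cons_append, nil_append, length_cons,
      destutter'_cons_neg (R := (· ≠ ·)) _ (not_not.2 rfl), destutter'_cons_pos _ hxy,
      ih hxy.symm]

theorem length_destutter_altJoin_pair_le {x y : α} (hxy : x ≠ y) (m : ℕ) :
    ((altJoin [x, y] [y, x] m).destutter (· ≠ ·)).length ≤ m + 1 := by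
  cases m with
  | zero => simp [altJoin]
  | succ m =>
    simp only [altJoin, cons_append, nil_append, destutter_cons', destutter'_cons_pos _ hxy,
      length_cons, length_destutter'_altJoin_pair hxy.symm, le_refl]

theorem IsChain.length_le_of_sublist_altJoin [Nontrivial α] {C L : List α} {m : ℕ}
    (hC : C.IsChain (· ≠ ·)) (hL : L.Nodup) (h2 : L.length ≤ 2)
    (h : C <+ altJoin L L.reverse m) : C.length ≤ m + 1 := by
  obtain ⟨x, y, hxy, hLxy⟩ := exists_ne_sublist_pair hL h2
  calc C.length ≤ ((altJoin [x, y] [y, x] m).destutter (· ≠ ·)).length :=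
        hC.length_le_length_destutter_ne (h.trans (altJoin_sublist_altJoin hLxy hLxy.reverse m))
    _ ≤ m + 1 := length_destutter_altJoin_pair_le hxy m

end List

open List

def altPowers (p q : List ℕ) : List ℕ → List ℕ
  | [] => []
  | k :: e => rep p k ++ altPowers q p e

theorem rep_succ (l : List ℕ) (k : ℕ) : rep l (k + 1) = l ++ rep l k := by
  simp [rep, replicate_succ]

theorem rep_sublist_rep {p p' : List ℕ} (h : p <+ p') (k : ℕ) : rep p k <+ rep p' k := by
  induction k with
  | zero => exact .slnil
  | succ k ih => simpa only [rep_succ] using h.append ih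

theorem altPowers_sublist_altPowers {p p' q q' : List ℕ} (hp : p <+ p') (hq : q <+ q')
    (e : List ℕ) : altPowers p q e <+ altPowers p' q' e := by
  induction e generalizing p p' q q' with
  | nil => exact .slnil
  | cons k e ih => exact (rep_sublist_rep hp k).append (ih hq hp)

theorem zigzag_two_mul_add (a b j n : ℕ) :
    zigzag a b (2 * j + n) = rep [a, b] j ++ zigzag a b n := by
  induction j with
  | zero => simp [rep]
  | succ j ih =>
    rw [show 2 * (j + 1) + n = 2 * j + n + 1 + 1 by ring, rep_succ]
    simp only [zigzag, ih, cons_append, nil_append]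

theorem zigzag_sublist_altPowers_swap (a b : ℕ) {e : List ℕ} (he : ∀ k ∈ e, 0 < k) :
    zigzag a b (2 * e.sum - e.length) <+ altPowers [b, a] [a, b] e := by
  induction e generalizing a b with
  | nil => exact .slnil
  | cons k e ih =>
    rw [forall_mem_cons] at he
    obtain ⟨hk, he⟩ := he
    obtain ⟨j, rfl⟩ := Nat.exists_eq_add_one.2 hk
    have hle := length_le_sum_of_one_le e he
    rw [show 2 * ((j + 1) :: e).sum - ((j + 1) :: e).length
        = 2 * j + (2 * e.sum - e.length) + 1 by simp only [sum_cons, length_cons]; omega]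
    simp only [zigzag, zigzag_two_mul_add, altPowers, rep_succ, cons_append, nil_append]
    exact (((ih b a he).append_left _).cons_cons a).cons b

theorem zigzag_sublist_altPowers (a b : ℕ) {e : List ℕ} (he : ∀ k ∈ e, 0 < k) (hne : e ≠ []) :
    zigzag a b (2 * e.sum - e.length + 1) <+ altPowers [a, b] [b, a] e := by
  obtain ⟨k, e, rfl⟩ := exists_cons_of_ne_nil hne
  rw [forall_mem_cons] at he
  obtain ⟨hk, he⟩ := he
  obtain ⟨j, rfl⟩ := Nat.exists_eq_add_one.2 hk
  have hle := length_le_sum_of_one_le e he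
  rw [show 2 * ((j + 1) :: e).sum - ((j + 1) :: e).length + 1
      = 2 * (j + 1) + (2 * e.sum - e.length) by simp only [sum_cons, length_cons]; omega,
    zigzag_two_mul_add]
  exact (zigzag_sublist_altPowers_swap a b he).append_left _

theorem rep_append_sublist_altJoin {p q t : List ℕ} {M : ℕ} (ht : t <+ altJoin q p M) (k : ℕ) :
    rep p (k + 1) ++ t <+ altJoin p q (M + 2 * k + 1) := by
  induction k with
  | zero =>
    show (p ++ []) ++ t <+ p ++ altJoin q p M
    simpa only [append_nil] using ht.append_left p
  | succ k ih =>
    rw [rep_succ, append_assoc]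
    exact (ih.trans (sublist_append_right q _)).append_left p

theorem altPowers_sublist_altJoin (p q : List ℕ) {e : List ℕ} (he : ∀ k ∈ e, 0 < k) :
    altPowers p q e <+ altJoin p q (2 * e.sum - e.length) := by
  induction e generalizing p q with
  | nil => exact .slnil
  | cons k e ih =>
    rw [forall_mem_cons] at he
    obtain ⟨hk, he⟩ := he
    obtain ⟨j, rfl⟩ := Nat.exists_eq_add_one.2 hk
    have hle := length_le_sum_of_one_le e he
    rw [show 2 * ((j + 1) :: e).sum - ((j + 1) :: e).length
        = 2 * e.sum - e.length + 2 * j + 1 by simp only [sum_cons, length_cons]; omega]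
    exact rep_append_sublist_altJoin (ih q p he) j

theorem flatten_map_range_ite_mod_two {α : Type*} (p q : List α) (m : ℕ) :
    ((range m).map (fun i => if i % 2 = 0 then p else q)).flatten = altJoin p q m := by
  induction m generalizing p q with
  | zero => rfl
  | succ m ih =>
    rw [range_succ_eq_map, map_cons, map_map, flatten_cons, altJoin, ← ih q p]
    congr 3
    funext i
    rcases Nat.mod_two_eq_zero_or_one i with h | h <;> simp [h, Nat.succ_mod_two_eq_zero_iff]

theorem altSeq_eq_altJoin (c m : ℕ) : altSeq c m = altJoin (Ic c) (Dc c) m :=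
  flatten_map_range_ite_mod_two _ _ m

theorem flatten_map_zipIdx_ite_mod_two (p q e : List ℕ) (i : ℕ) :
    ((e.zipIdx i).map (fun x => rep (if x.2 % 2 = 0 then p else q) x.1)).flatten =
      if i % 2 = 0 then altPowers p q e else altPowers q p e := by
  induction e generalizing i with
  | nil => simp [altPowers]
  | cons k e ih =>
    rw [zipIdx_cons, map_cons, flatten_cons, ih]
    rcases Nat.mod_two_eq_zero_or_one i with h | h <;>
      simp [h, altPowers, Nat.succ_mod_two_eq_zero_iff]

theorem altBlocks_eq_altPowers (c : ℕ) (e : List ℕ) :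
    altBlocks c e = altPowers (Ic c) (Dc c) e :=
  flatten_map_zipIdx_ite_mod_two _ _ e 0

theorem one_c_sublist_Ic {c : ℕ} (hc : 2 ≤ c) : [1, c] <+ Ic c := by
  obtain ⟨d, rfl⟩ := Nat.exists_eq_add_of_le' hc
  rw [Ic, range'_succ]
  exact (singleton_sublist.2 (mem_range'_1.2 ⟨by omega, by omega⟩)).cons_cons 1

theorem contains_altSeq_altBlocks (c : ℕ) {e : List ℕ} (he : ∀ k ∈ e, 0 < k) :
    Contains (altSeq c (2 * e.sum - e.length)) (altBlocks c e) := by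
  refine ⟨id, Function.injective_id, ?_⟩
  rw [map_id, altBlocks_eq_altPowers, altSeq_eq_altJoin]
  exact altPowers_sublist_altJoin _ _ he

theorem zigzag_sublist_altBlocks {c : ℕ} (hc : 2 ≤ c) {e : List ℕ} (he : ∀ k ∈ e, 0 < k)
    (hne : e ≠ []) : zigzag 1 c (2 * e.sum - e.length + 1) <+ altBlocks c e := by
  have hIc := one_c_sublist_Ic hc
  rw [altBlocks_eq_altPowers]
  exact (zigzag_sublist_altPowers 1 c he hne).trans
    (altPowers_sublist_altPowers hIc (by simpa [Dc] using hIc.reverse) e)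

theorem nodup_Ic (c : ℕ) : (Ic c).Nodup := nodup_range'

theorem length_filter_Ic_le_two (c a b : ℕ) :
    ((Ic c).filter fun x => x = a ∨ x = b).length ≤ 2 :=
  (((nodup_Ic c).filter _).subperm (l₂ := [a, b])
    fun x hx => by simpa using (mem_filter.1 hx).2).length_le

theorem le_of_contains_altSeq_altBlocks {c m : ℕ} (hc : 2 ≤ c) {e : List ℕ}
    (he : ∀ k ∈ e, 0 < k) (h : Contains (altSeq c m) (altBlocks c e)) :
    2 * e.sum - e.length ≤ m := by
  rcases eq_or_ne e [] with rfl | hne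
  · simp
  obtain ⟨f, hf, hsub⟩ := h
  have hab : f 1 ≠ f c := hf.ne (by omega)
  let P : ℕ → Bool := fun x => x = f 1 ∨ x = f c
  have hchain : zigzag (f 1) (f c) (2 * e.sum - e.length + 1) <+
      altJoin ((Ic c).filter P) ((Ic c).filter P).reverse m := by
    have := (((zigzag_sublist_altBlocks hc he hne).map f).trans hsub).filter P
    rwa [map_zigzag, filter_eq_self.2 fun x hx => by simpa [P] using eq_or_eq_of_mem_zigzag hx,
      altSeq_eq_altJoin, filter_altJoin, Dc, filter_reverse] at this
  have := (isChain_zigzag hab _).length_le_of_sublist_altJoin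
    ((nodup_Ic c).filter P) (length_filter_Ic_le_two c _ _) hchain
  rw [length_zigzag] at this
  omega

theorem stmt14_general (c : ℕ) (hc : 2 ≤ c) (e : List ℕ) (he : ∀ x ∈ e, 0 < x) :
    rval c (altBlocks c e) = 2 * e.sum - e.length :=
  le_antisymm (Nat.sInf_le (contains_altSeq_altBlocks c he))
    (le_csInf ⟨_, contains_altSeq_altBlocks c he⟩
      fun _ hm => le_of_contains_altSeq_altBlocks hc he hm)

theorem stmt14 (c : ℕ) (hc : 2 ≤ c) (e : List ℕ) (he : ∀ x ∈ e, 0 < x)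
    (hne : e ≠ []) :
    rval c (altBlocks c e) = 2 * e.sum - e.length :=
  stmt14_general c hc e he
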